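/- arXiv:2406.07746 — 8 statements merged into one kernel-verified Lean document; each statement's English description precedes it below -/
import Mathlib

section
/- Let X and Δ be real p×q matrices, let V be a q×q positive definite real matrix, and let r > 0 satisfy ΔᵀΔ ⪯ r·V⁻¹. Then for every positive semidefinite p×p real matrix P and every real μ with μ ≥ r + 2‖X‖·‖V‖^{1/2}·r^{1/2}, the two-sided Loewner bound −μ·tr(P)·V⁻¹ ⪯ (X+Δ)ᵀP(X+Δ) − XᵀPX ⪯ μ·tr(P)·V⁻¹ holds. -/
open Matrix
open scoped Matrix.Norms.L2Operator

/-!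
With `u = X y` and `v = D y`, the quadratic form of `(X+D)ᵀP(X+D) − XᵀPX` at `y` is
`vᵀPv + 2 uᵀPv`. Since `P ⪯ tr(P)·I`, we get `vᵀPv ≤ tr(P)‖Dy‖² ≤ tr(P)·r·yᵀV⁻¹y` and
`uᵀPu ≤ tr(P)‖X‖²‖y‖² ≤ tr(P)‖X‖²‖V‖·yᵀV⁻¹y`; Cauchy–Schwarz for the form `P` bounds the
cross term by the geometric mean of the two, so the form is at most
`(r + 2‖X‖‖V‖^{1/2}r^{1/2})·tr(P)·yᵀV⁻¹y` in absolute value.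
-/

namespace Matrix

variable {m n : Type*} [Fintype m] [Fintype n]

theorem PosSemidef.sq_dotProduct_mulVec_le {P : Matrix n n ℝ} (hP : P.PosSemidef) (x y : n → ℝ) :
    (x ⬝ᵥ P *ᵥ y) ^ 2 ≤ (x ⬝ᵥ P *ᵥ x) * (y ⬝ᵥ P *ᵥ y) := by
  let := P.toSeminormedAddCommGroup hP
  let := P.toInnerProductSpace hP
  have h : (P *ᵥ y ⬝ᵥ star x) * (P *ᵥ y ⬝ᵥ star x) ≤ (P *ᵥ x ⬝ᵥ star x) * (P *ᵥ y ⬝ᵥ star y) :=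
    real_inner_mul_inner_self_le x y
  simpa only [star_trivial, dotProduct_comm _ x, dotProduct_comm _ y, sq] using h

theorem sq_dotProduct_le (x y : n → ℝ) : (x ⬝ᵥ y) ^ 2 ≤ (x ⬝ᵥ x) * (y ⬝ᵥ y) := by
  classical
  simpa only [one_mulVec] using PosSemidef.one.sq_dotProduct_mulVec_le x y

theorem dotProduct_self_nonneg (x : n → ℝ) : 0 ≤ x ⬝ᵥ x :=
  Fintype.sum_nonneg fun i => mul_self_nonneg (x i)

theorem PosSemidef.dotProduct_mulVec_le_trace_mul {P : Matrix n n ℝ} (hP : P.PosSemidef)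
    (x : n → ℝ) : x ⬝ᵥ P *ᵥ x ≤ P.trace * (x ⬝ᵥ x) := by
  obtain ⟨k, v, rfl⟩ := posSemidef_iff_eq_sum_vecMulVec.mp hP
  simp only [sum_mulVec, dotProduct_sum, trace_sum, Finset.sum_mul, star_trivial]
  gcongr with i
  rw [vecMulVec_mulVec, dotProduct_smul, op_smul_eq_mul, trace_vecMulVec, dotProduct_comm x, ← sq]
  exact sq_dotProduct_le _ _

theorem dotProduct_mulVec_le_of_posSemidef_sub {A B : Matrix n n ℝ} (h : (A - B).PosSemidef)
    (x : n → ℝ) : x ⬝ᵥ B *ᵥ x ≤ x ⬝ᵥ A *ᵥ x := by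
  have := h.dotProduct_mulVec_nonneg x
  rw [star_trivial, sub_mulVec, dotProduct_sub] at this
  linarith

theorem mulVec_dotProduct_mulVec_le_l2_opNorm_sq [DecidableEq n] (A : Matrix m n ℝ)
    (x : n → ℝ) : (A *ᵥ x) ⬝ᵥ (A *ᵥ x) ≤ ‖A‖ ^ 2 * (x ⬝ᵥ x) := by
  have h := A.l2_opNorm_mulVec (WithLp.toLp 2 x)
  rw [← sq_le_sq₀ (norm_nonneg _) (by positivity), mul_pow, EuclideanSpace.real_norm_sq_eq,
    EuclideanSpace.real_norm_sq_eq] at h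
  simpa [dotProduct, sq] using h

theorem dotProduct_mulVec_le_l2_opNorm_mul [DecidableEq n] (A : Matrix n n ℝ) (x : n → ℝ) :
    x ⬝ᵥ A *ᵥ x ≤ ‖A‖ * (x ⬝ᵥ x) := by
  have hx := dotProduct_self_nonneg x
  refine le_of_abs_le (abs_le_of_sq_le_sq ?_ (by positivity))
  calc (x ⬝ᵥ A *ᵥ x) ^ 2 ≤ (x ⬝ᵥ x) * ((A *ᵥ x) ⬝ᵥ (A *ᵥ x)) := sq_dotProduct_le _ _
    _ ≤ (x ⬝ᵥ x) * (‖A‖ ^ 2 * (x ⬝ᵥ x)) := by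
      gcongr; exact mulVec_dotProduct_mulVec_le_l2_opNorm_sq A x
    _ = (‖A‖ * (x ⬝ᵥ x)) ^ 2 := by ring

theorem IsSymm.dotProduct_mulVec_comm {A : Matrix n n ℝ} (hA : A.IsSymm) (x y : n → ℝ) :
    x ⬝ᵥ A *ᵥ y = y ⬝ᵥ A *ᵥ x := by
  rw [dotProduct_mulVec, ← mulVec_transpose, hA.eq, dotProduct_comm]

theorem PosDef.dotProduct_self_le_l2_opNorm_mul_inv [DecidableEq n] {V : Matrix n n ℝ}
    (hV : V.PosDef) (x : n → ℝ) : x ⬝ᵥ x ≤ ‖V‖ * (x ⬝ᵥ V⁻¹ *ᵥ x) := by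
  have hVsymm : V.IsSymm := isHermitian_iff_isSymm.mp hV.isHermitian
  set y := V⁻¹ *ᵥ x
  have hVy : V *ᵥ y = x := by
    rw [mulVec_mulVec, mul_nonsing_inv V ((isUnit_iff_isUnit_det V).mp hV.isUnit), one_mulVec]
  have hxx : x ⬝ᵥ x = y ⬝ᵥ V *ᵥ x := by rw [hVsymm.dotProduct_mulVec_comm, hVy]
  have hyy : y ⬝ᵥ V *ᵥ y = x ⬝ᵥ y := by rw [hVy, dotProduct_comm]
  have hQ : 0 ≤ x ⬝ᵥ y := by simpa using hV.inv.posSemidef.dotProduct_mulVec_nonneg x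
  -- Cauchy–Schwarz for the form `V`, applied to `y = V⁻¹x` and `x`.
  have hCS : (x ⬝ᵥ x) ^ 2 ≤ (x ⬝ᵥ y) * (‖V‖ * (x ⬝ᵥ x)) :=
    calc (x ⬝ᵥ x) ^ 2 = (y ⬝ᵥ V *ᵥ x) ^ 2 := by rw [hxx]
      _ ≤ (y ⬝ᵥ V *ᵥ y) * (x ⬝ᵥ V *ᵥ x) := hV.posSemidef.sq_dotProduct_mulVec_le y x
      _ ≤ (x ⬝ᵥ y) * (‖V‖ * (x ⬝ᵥ x)) := by
        rw [hyy]; gcongr; exact dotProduct_mulVec_le_l2_opNorm_mul V x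
  nlinarith [dotProduct_self_nonneg x, mul_nonneg (norm_nonneg V) hQ]

theorem dotProduct_transpose_mul_mulVec {l : Type*} [Fintype l] (A : Matrix l m ℝ)
    (B : Matrix l n ℝ) (x : m → ℝ) (y : n → ℝ) :
    x ⬝ᵥ (Aᵀ * B) *ᵥ y = (A *ᵥ x) ⬝ᵥ (B *ᵥ y) := by
  rw [← mulVec_mulVec, dotProduct_mulVec, vecMul_transpose]

theorem dotProduct_transpose_mul_mul_mulVec {l : Type*} [Fintype l] (A : Matrix l m ℝ)
    (P : Matrix l l ℝ) (x : m → ℝ) : x ⬝ᵥ (Aᵀ * P * A) *ᵥ x = (A *ᵥ x) ⬝ᵥ P *ᵥ (A *ᵥ x) := by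
  rw [Matrix.mul_assoc, dotProduct_transpose_mul_mulVec, mulVec_mulVec]

theorem IsSymm.transpose_mul_mul {k : Type*} {P : Matrix n n ℝ} (hP : P.IsSymm)
    (A : Matrix n k ℝ) : (Aᵀ * P * A).IsSymm := by
  simp only [IsSymm, transpose_mul, transpose_transpose, hP.eq, Matrix.mul_assoc]

theorem IsSymm.add_dotProduct_mulVec_add_sub {P : Matrix n n ℝ} (hP : P.IsSymm) (u v : n → ℝ) :
    (u + v) ⬝ᵥ P *ᵥ (u + v) - u ⬝ᵥ P *ᵥ u = v ⬝ᵥ P *ᵥ v + 2 * (u ⬝ᵥ P *ᵥ v) := by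
  rw [mulVec_add, dotProduct_add, add_dotProduct, add_dotProduct, hP.dotProduct_mulVec_comm v u]
  ring

theorem PosSemidef.abs_add_dotProduct_mulVec_add_sub_le {P : Matrix n n ℝ} (hP : P.PosSemidef)
    {u v : n → ℝ} {s α β : ℝ} (hs : 0 ≤ s) (hα : 0 ≤ α) (hβ : 0 ≤ β)
    (hu : u ⬝ᵥ P *ᵥ u ≤ s * α ^ 2) (hv : v ⬝ᵥ P *ᵥ v ≤ s * β ^ 2) :
    |(u + v) ⬝ᵥ P *ᵥ (u + v) - u ⬝ᵥ P *ᵥ u| ≤ s * (β ^ 2 + 2 * α * β) := by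
  have hv0 : 0 ≤ v ⬝ᵥ P *ᵥ v := by simpa only [star_trivial] using hP.dotProduct_mulVec_nonneg v
  have hcross : |u ⬝ᵥ P *ᵥ v| ≤ s * α * β := by
    refine abs_le_of_sq_le_sq ?_ (by positivity)
    calc (u ⬝ᵥ P *ᵥ v) ^ 2 ≤ (u ⬝ᵥ P *ᵥ u) * (v ⬝ᵥ P *ᵥ v) := hP.sq_dotProduct_mulVec_le u v
      _ ≤ (s * α ^ 2) * (s * β ^ 2) := mul_le_mul hu hv hv0 (by positivity)
      _ = (s * α * β) ^ 2 := by ring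
  rw [(isHermitian_iff_isSymm.mp hP.isHermitian).add_dotProduct_mulVec_add_sub, abs_le]
  constructor <;> linarith [abs_le.mp hcross]

theorem posSemidef_add_and_sub_of_abs_dotProduct_mulVec_le {M N : Matrix n n ℝ}
    (hM : M.IsSymm) (hN : N.IsSymm) (h : ∀ x, |x ⬝ᵥ M *ᵥ x| ≤ x ⬝ᵥ N *ᵥ x) :
    (M + N).PosSemidef ∧ (N - M).PosSemidef := by
  refine ⟨.of_dotProduct_mulVec_nonneg (isHermitian_iff_isSymm.mpr (hM.add hN)) fun x => ?_,
    .of_dotProduct_mulVec_nonneg (isHermitian_iff_isSymm.mpr (hN.sub hM)) fun x => ?_⟩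
  · rw [star_trivial, add_mulVec, dotProduct_add]
    linarith [neg_abs_le (x ⬝ᵥ M *ᵥ x), h x]
  · rw [star_trivial, sub_mulVec, dotProduct_sub]
    linarith [le_abs_self (x ⬝ᵥ M *ᵥ x), h x]

end Matrix

/-- **Perturbation lemma.** If `DᵀD ⪯ r·V⁻¹` with `V ≻ 0` and `r > 0`, then for any
positive semidefinite `P` and any `μ ≥ r + 2‖X‖·‖V‖^{1/2}·r^{1/2}`, the two-sided
Loewner bound `−μ·tr(P)·V⁻¹ ⪯ (X+D)ᵀP(X+D) − XᵀPX ⪯ μ·tr(P)·V⁻¹` holds.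
Norms are spectral (ℓ²-operator) norms. -/
theorem perturbation_lemma {p q : ℕ}
    (X D : Matrix (Fin p) (Fin q) ℝ) (V : Matrix (Fin q) (Fin q) ℝ) (r : ℝ)
    (hV : V.PosDef) (hr : 0 < r)
    (hD : (r • V⁻¹ - Dᵀ * D).PosSemidef)
    (P : Matrix (Fin p) (Fin p) ℝ) (hP : P.PosSemidef)
    (μ : ℝ) (hμ : r + 2 * ‖X‖ * Real.sqrt ‖V‖ * Real.sqrt r ≤ μ) :
    ((X + D)ᵀ * P * (X + D) - Xᵀ * P * X + (μ * P.trace) • V⁻¹).PosSemidef ∧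
      ((μ * P.trace) • V⁻¹ - ((X + D)ᵀ * P * (X + D) - Xᵀ * P * X)).PosSemidef := by
  have hPsymm : P.IsSymm := isHermitian_iff_isSymm.mp hP.isHermitian
  refine posSemidef_add_and_sub_of_abs_dotProduct_mulVec_le
    ((hPsymm.transpose_mul_mul _).sub (hPsymm.transpose_mul_mul _))
    ((isHermitian_iff_isSymm.mp hV.inv.isHermitian).smul _) fun y => ?_
  set t := P.trace
  set Q := y ⬝ᵥ V⁻¹ *ᵥ y
  have ht : 0 ≤ t := hP.trace_nonneg
  have hQ : 0 ≤ Q := by simpa using hV.inv.posSemidef.dotProduct_mulVec_nonneg y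
  have hXy : (X *ᵥ y) ⬝ᵥ P *ᵥ (X *ᵥ y) ≤ t * Q * (‖X‖ * √‖V‖) ^ 2 :=
    calc _ ≤ t * ((X *ᵥ y) ⬝ᵥ (X *ᵥ y)) := hP.dotProduct_mulVec_le_trace_mul _
      _ ≤ t * (‖X‖ ^ 2 * (‖V‖ * Q)) := by
        gcongr
        exact (mulVec_dotProduct_mulVec_le_l2_opNorm_sq X y).trans
          (by gcongr; exact hV.dotProduct_self_le_l2_opNorm_mul_inv y)
      _ = t * Q * (‖X‖ * √‖V‖) ^ 2 := by rw [mul_pow, Real.sq_sqrt (norm_nonneg V)]; ring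
  have hDy : (D *ᵥ y) ⬝ᵥ P *ᵥ (D *ᵥ y) ≤ t * Q * √r ^ 2 := by
    have h := dotProduct_mulVec_le_of_posSemidef_sub hD y
    rw [dotProduct_transpose_mul_mulVec, smul_mulVec, dotProduct_smul, smul_eq_mul] at h
    calc _ ≤ t * ((D *ᵥ y) ⬝ᵥ (D *ᵥ y)) := hP.dotProduct_mulVec_le_trace_mul _
      _ ≤ t * Q * √r ^ 2 := by rw [Real.sq_sqrt hr.le, mul_assoc, mul_comm Q]; gcongr
  rw [sub_mulVec, dotProduct_sub, dotProduct_transpose_mul_mul_mulVec,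
    dotProduct_transpose_mul_mul_mulVec, add_mulVec, smul_mulVec, dotProduct_smul, smul_eq_mul]
  calc _ ≤ t * Q * (√r ^ 2 + 2 * (‖X‖ * √‖V‖) * √r) :=
        hP.abs_add_dotProduct_mulVec_add_sub_le (by positivity) (by positivity) (by positivity)
          hXy hDy
    _ = (r + 2 * ‖X‖ * √‖V‖ * √r) * (t * Q) := by rw [Real.sq_sqrt hr.le]; ring
    _ ≤ μ * (t * Q) := by gcongr
    _ = μ * t * Q := (mul_assoc _ _ _).symm
end

section
/- Let X and Z be real symmetric n×n matrices and let M be an n×n real matrix that is (κ,γ)-strongly stable for some κ > 0 and 0 < γ < 1. If X ⪯ MᵀXM + Z, then X ⪯ (κ²/γ)·‖Z‖·I. -/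
open Matrix
open scoped Matrix.Norms.L2Operator

/-- A real square matrix `M` is `(κ,γ)`-strongly stable if there exist an invertible `H`
and an `L` with `M = H L H⁻¹`, `‖L‖ ≤ 1 − γ` and `‖H‖·‖H⁻¹‖ ≤ κ`
(spectral norms). -/
def StronglyStable {n : ℕ} (M : Matrix (Fin n) (Fin n) ℝ) (κ γ : ℝ) : Prop :=
  ∃ H L : Matrix (Fin n) (Fin n) ℝ,
    IsUnit H.det ∧ M = H * L * H⁻¹ ∧ ‖L‖ ≤ 1 - γ ∧ ‖H‖ * ‖H⁻¹‖ ≤ κ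

/-!
Iterating `X ⪯ MᵀXM + Z` gives `X ⪯ (Mᵏ)ᵀ X Mᵏ + ∑_{i<k} (Mⁱ)ᵀ Z Mⁱ`. Strong stability gives
`‖Mⁱ‖ ≤ κ (1 - γ)ⁱ`, so `(Mⁱ)ᵀ Z Mⁱ ⪯ ‖Z‖ κ² (1 - γ)²ⁱ I`; these sum to at most `κ² ‖Z‖ / γ`
since `1 - (1 - γ)² ≥ γ`, while `(Mᵏ)ᵀ X Mᵏ ⪯ ‖X‖ κ² (1 - γ)²ᵏ I` vanishes as `k → ∞`. The limit is taken on the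
spectrum of `X`: each eigenvalue lies below every one of these bounds.
-/

open Filter Topology
open scoped MatrixOrder

theorem le_star_pow_mul_mul_pow_add_sum {R : Type*} [Semiring R] [PartialOrder R] [StarRing R]
    [StarOrderedRing R] {x m z : R} (h : x ≤ star m * x * m + z) (k : ℕ) :
    x ≤ star (m ^ k) * x * m ^ k + ∑ i ∈ Finset.range k, star (m ^ i) * z * m ^ i := by
  induction k with
  | zero => simp
  | succ k ih =>
    calc x ≤ star (m ^ k) * x * m ^ k + ∑ i ∈ Finset.range k, star (m ^ i) * z * m ^ i := ih
      _ ≤ star (m ^ k) * (star m * x * m + z) * m ^ k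
            + ∑ i ∈ Finset.range k, star (m ^ i) * z * m ^ i := by
        gcongr
        exact star_left_conjugate_le_conjugate h _
      _ = _ := by
        rw [Finset.sum_range_succ, pow_succ', star_mul]
        noncomm_ring

theorem le_algebraMap_of_tendsto {A : Type*} [TopologicalSpace A] [Ring A] [StarRing A]
    [PartialOrder A] [StarOrderedRing A] [Algebra ℝ A] [NonnegSpectrumClass ℝ A]
    [ContinuousFunctionalCalculus ℝ A IsSelfAdjoint] {a : A} (ha : IsSelfAdjoint a) {c : ℝ}
    {ε : ℕ → ℝ} (hε : Tendsto ε atTop (𝓝 0)) (h : ∀ k, a ≤ algebraMap ℝ A (c + ε k)) :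
    a ≤ algebraMap ℝ A c := by
  rw [le_algebraMap_iff_spectrum_le ha]
  intro x hx
  have hc : Tendsto (fun k ↦ c + ε k) atTop (𝓝 c) := by simpa using hε.const_add c
  exact ge_of_tendsto' hc fun k ↦ (le_algebraMap_iff_spectrum_le ha).1 (h k) x hx

theorem sum_range_one_sub_sq_pow_le {γ : ℝ} (hγ0 : 0 < γ) (hγ1 : γ ≤ 1) (k : ℕ) :
    ∑ i ∈ Finset.range k, ((1 - γ) ^ 2) ^ i ≤ 1 / γ := by
  have hγr : γ ≤ 1 - (1 - γ) ^ 2 := by nlinarith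
  calc ∑ i ∈ Finset.range k, ((1 - γ) ^ 2) ^ i ≤ ((1 - γ) ^ 2) ^ 0 / (1 - (1 - γ) ^ 2) := by
        rw [Finset.range_eq_Ico]
        exact geom_sum_Ico_le_of_lt_one (sq_nonneg _) (by linarith)
    _ ≤ 1 / γ := by rw [pow_zero]; gcongr

namespace Matrix

variable {ι 𝕜 : Type*} [Fintype ι] [DecidableEq ι] [RCLike 𝕜]

theorem l2_opNorm_one_le : ‖(1 : Matrix ι ι 𝕜)‖ ≤ 1 := by
  rw [← diagonal_one, l2_opNorm_diagonal]
  exact pi_norm_le_iff_of_nonneg zero_le_one |>.2 fun _ ↦ norm_one.le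

theorem l2_opNorm_pow_le (A : Matrix ι ι 𝕜) (k : ℕ) : ‖A ^ k‖ ≤ ‖A‖ ^ k := by
  induction k with
  | zero => simpa using l2_opNorm_one_le
  | succ k ih =>
    rw [pow_succ, pow_succ]
    exact (l2_opNorm_mul _ _).trans (by gcongr)

theorem le_l2_opNorm_of_mem_spectrum {A : Matrix ι ι ℝ} {r : ℝ} (hr : r ∈ spectrum ℝ A) :
    r ≤ ‖A‖ := by
  have hr' := spectrum.subset_closedBall_norm_mul A hr
  rw [Metric.mem_closedBall, dist_zero_right] at hr'
  calc r ≤ ‖r‖ := Real.le_norm_self r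
    _ ≤ ‖A‖ * ‖(1 : Matrix ι ι ℝ)‖ := hr'
    _ ≤ ‖A‖ := mul_le_of_le_one_right (norm_nonneg A) l2_opNorm_one_le

theorem IsHermitian.le_l2_opNorm_smul_one {A : Matrix ι ι ℝ} (hA : A.IsHermitian) :
    A ≤ ‖A‖ • (1 : Matrix ι ι ℝ) := by
  rw [← Algebra.algebraMap_eq_smul_one]
  exact le_algebraMap_of_spectrum_le fun r hr ↦ le_l2_opNorm_of_mem_spectrum hr

theorem IsHermitian.conjTranspose_mul_mul_le {Y : Matrix ι ι ℝ} (hY : Y.IsHermitian)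
    (A : Matrix ι ι ℝ) : Aᴴ * Y * A ≤ (‖Y‖ * ‖A‖ ^ 2) • (1 : Matrix ι ι ℝ) := by
  have hnorm : ‖Aᴴ * Y * A‖ ≤ ‖Y‖ * ‖A‖ ^ 2 :=
    calc ‖Aᴴ * Y * A‖ ≤ ‖Aᴴ‖ * ‖Y‖ * ‖A‖ :=
          (l2_opNorm_mul _ _).trans (by gcongr; exact l2_opNorm_mul _ _)
      _ = ‖Y‖ * ‖A‖ ^ 2 := by rw [l2_opNorm_conjTranspose]; ring
  exact (isHermitian_conjTranspose_mul_mul A hY).le_l2_opNorm_smul_one.trans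
    (smul_le_smul_of_nonneg_right hnorm zero_le_one)

end Matrix

namespace StronglyStable

variable {n : ℕ} {M : Matrix (Fin n) (Fin n) ℝ} {κ γ : ℝ}

theorem le_one (hM : StronglyStable M κ γ) : γ ≤ 1 := by
  obtain ⟨-, L, -, -, hL, -⟩ := hM
  linarith [norm_nonneg L]

theorem norm_pow_le (hM : StronglyStable M κ γ) (k : ℕ) : ‖M ^ k‖ ≤ κ * (1 - γ) ^ k := by
  obtain ⟨H, L, hH, rfl, hL, hHκ⟩ := hM
  have hpow : (H * L * H⁻¹) ^ k = H * L ^ k * H⁻¹ := Units.conj_pow (nonsingInvUnit H hH) L k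
  calc ‖(H * L * H⁻¹) ^ k‖ ≤ ‖H‖ * ‖L ^ k‖ * ‖H⁻¹‖ := by
        rw [hpow]
        exact (l2_opNorm_mul _ _).trans (by gcongr; exact l2_opNorm_mul _ _)
    _ ≤ ‖H‖ * ‖H⁻¹‖ * ‖L‖ ^ k := by
        rw [mul_right_comm]
        gcongr
        exact l2_opNorm_pow_le L k
    _ ≤ κ * (1 - γ) ^ k := by
        gcongr
        exact (mul_nonneg (norm_nonneg _) (norm_nonneg _)).trans hHκ

theorem conjTranspose_pow_mul_mul_pow_le (hM : StronglyStable M κ γ)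
    {Y : Matrix (Fin n) (Fin n) ℝ} (hY : Y.IsHermitian) (k : ℕ) :
    (M ^ k)ᴴ * Y * M ^ k ≤ (‖Y‖ * κ ^ 2 * ((1 - γ) ^ 2) ^ k) • (1 : Matrix (Fin n) (Fin n) ℝ) := by
  refine (hY.conjTranspose_mul_mul_le _).trans (smul_le_smul_of_nonneg_right ?_ zero_le_one)
  rw [mul_assoc, ← pow_mul, mul_comm 2 k, pow_mul, ← mul_pow]
  gcongr
  exact hM.norm_pow_le k

theorem le_algebraMap_of_le_star_mul_mul_add (hM : StronglyStable M κ γ) (hγ0 : 0 < γ)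
    {X Z : Matrix (Fin n) (Fin n) ℝ} (hX : X.IsHermitian) (hZ : Z.IsHermitian)
    (h : X ≤ star M * X * M + Z) (k : ℕ) :
    X ≤ algebraMap ℝ _ (κ ^ 2 / γ * ‖Z‖ + ‖X‖ * κ ^ 2 * ((1 - γ) ^ 2) ^ k) := by
  calc X ≤ star (M ^ k) * X * M ^ k + ∑ i ∈ Finset.range k, star (M ^ i) * Z * M ^ i :=
        le_star_pow_mul_mul_pow_add_sum h k
    _ ≤ (‖X‖ * κ ^ 2 * ((1 - γ) ^ 2) ^ k) • 1
          + ∑ i ∈ Finset.range k, (‖Z‖ * κ ^ 2 * ((1 - γ) ^ 2) ^ i) • 1 := by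
        gcongr with i
        · exact hM.conjTranspose_pow_mul_mul_pow_le hX k
        · exact hM.conjTranspose_pow_mul_mul_pow_le hZ i
    _ ≤ _ := by
        rw [Algebra.algebraMap_eq_smul_one, ← Finset.sum_smul, ← add_smul, add_comm]
        refine smul_le_smul_of_nonneg_right (add_le_add_left ?_ _) zero_le_one
        rw [← Finset.mul_sum, div_mul_eq_mul_div, mul_comm ‖Z‖, ← mul_one_div]
        gcongr
        exact sum_range_one_sub_sq_pow_le hγ0 hM.le_one k

end StronglyStable

theorem loewner_bound_of_stronglyStable_general {n : ℕ}
    (X Z M : Matrix (Fin n) (Fin n) ℝ) (κ γ : ℝ)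
    (hγ0 : 0 < γ)
    (hX : X.IsSymm) (hZ : Z.IsSymm)
    (hM : StronglyStable M κ γ)
    (h : (Mᵀ * X * M + Z - X).PosSemidef) :
    ((κ ^ 2 / γ * ‖Z‖) • (1 : Matrix (Fin n) (Fin n) ℝ) - X).PosSemidef := by
  have hXh : X.IsHermitian := hX
  have hdecay : Tendsto (fun k ↦ ‖X‖ * κ ^ 2 * ((1 - γ) ^ 2) ^ k) atTop (𝓝 0) := by
    have hr : (1 - γ) ^ 2 < 1 := by nlinarith [hM.le_one]
    simpa using (tendsto_pow_atTop_nhds_zero_of_lt_one (sq_nonneg _) hr).const_mul (‖X‖ * κ ^ 2)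
  have hbound := le_algebraMap_of_tendsto hXh.isSelfAdjoint hdecay
    (hM.le_algebraMap_of_le_star_mul_mul_add hγ0 hXh hZ h)
  rwa [Algebra.algebraMap_eq_smul_one] at hbound

/-- If `X` and `Z` are symmetric, `M` is `(κ,γ)`-strongly stable, and `X ⪯ MᵀXM + Z`,
then `X ⪯ (κ²/γ)·‖Z‖·I`. -/
theorem loewner_bound_of_stronglyStable {n : ℕ}
    (X Z M : Matrix (Fin n) (Fin n) ℝ) (κ γ : ℝ)
    (hκ : 0 < κ) (hγ0 : 0 < γ) (hγ1 : γ < 1)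
    (hX : X.IsSymm) (hZ : Z.IsSymm)
    (hM : StronglyStable M κ γ)
    (h : (Mᵀ * X * M + Z - X).PosSemidef) :
    ((κ ^ 2 / γ * ‖Z‖) • (1 : Matrix (Fin n) (Fin n) ℝ) - X).PosSemidef :=
  loewner_bound_of_stronglyStable_general X Z M κ γ hγ0 hX hZ hM h
end

section
/- For every positive definite d×d real matrix M and every vector z ∈ ℝ^d, min{zᵀM⁻¹z, 1} ≤ 2·log(det(z zᵀ + M) / det(M)). -/
/-!
By the matrix determinant lemma, `det (z zᵀ + M) / det M = 1 + s` with `s = zᵀ M⁻¹ z ≥ 0`, so the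
claim reduces to `min s 1 ≤ 2 s / (1 + s) ≤ 2 log (1 + s)`, the last step being
`1 - x⁻¹ ≤ log x`.
-/

open Matrix

theorem Matrix.det_vecMulVec_add {m α : Type*} [Fintype m] [DecidableEq m] [CommRing α]
    {A : Matrix m m α} (hA : IsUnit A.det) (u v : m → α) :
    (vecMulVec u v + A).det = A.det * (1 + v ⬝ᵥ A⁻¹ *ᵥ u) := by
  rw [add_comm, vecMulVec_eq Unit, det_add_replicateCol_mul_replicateRow hA, Matrix.mul_assoc,
    ← replicateCol_mulVec, det_unique (1 + _), add_apply, one_apply_eq,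
    replicateRow_mul_replicateCol_apply]

theorem Real.min_le_two_mul_log_one_add {s : ℝ} (hs : 0 ≤ s) :
    min s 1 ≤ 2 * Real.log (1 + s) := by
  have hpos : 0 < 1 + s := by linarith
  have hmin : min s 1 * (1 + s) ≤ 2 * s := by
    rcases le_total s 1 with h | h
    · rw [min_eq_left h]; nlinarith
    · rw [min_eq_right h]; linarith
  calc min s 1 ≤ 2 * s / (1 + s) := (le_div_iff₀ hpos).2 hmin
    _ = 2 * (1 - (1 + s)⁻¹) := by field_simp; ring
    _ ≤ 2 * Real.log (1 + s) := by gcongr; exact Real.one_sub_inv_le_log_of_pos hpos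

/-- For every positive definite `d×d` real matrix `M` and every `z ∈ ℝ^d`,
`min{zᵀM⁻¹z, 1} ≤ 2·log(det(z zᵀ + M) / det M)`. -/
theorem min_quadform_le_two_log_det {d : ℕ}
    (M : Matrix (Fin d) (Fin d) ℝ) (hM : M.PosDef) (z : Fin d → ℝ) :
    min (z ⬝ᵥ M⁻¹ *ᵥ z) 1 ≤ 2 * Real.log ((vecMulVec z z + M).det / M.det) := by
  have hquad : 0 ≤ z ⬝ᵥ M⁻¹ *ᵥ z := hM.inv.posSemidef.dotProduct_mulVec_nonneg z
  rw [det_vecMulVec_add hM.det_pos.ne'.isUnit, mul_div_cancel_left₀ _ hM.det_pos.ne']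
  exact Real.min_le_two_mul_log_one_add hquad
end

section
/- Let K be a real m×n matrix with ‖K‖ ≤ κ for some κ ≥ 1, and let a ≥ 1 be a real number. Then the (n+m)×(n+m) symmetric block matrix [[a·Iₙ, a·Kᵀ], [a·K, a·K Kᵀ + 2κ²·Iₘ]] is bounded below in the Loewner order by (1/2)·I_{n+m}. -/
open Matrix
open scoped Matrix.Norms.L2Operator

/-!
Writing `G(B) = [[I, B], [Bᴴ, Bᴴ B]] = [I B]ᴴ [I B]`, a Gram matrix, the matrix minus `½ I` splits
as `(a - 1) G(Kᵀ) + ½ G(2Kᵀ) + diag(0, (2κ² - ½) I - K Kᵀ)`. The first two terms are positive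
semidefinite because `a ≥ 1`, and the last one because `K Kᵀ ⪯ ‖K‖² I ⪯ κ² I` and `κ² ≥ ½`.
-/

namespace Matrix

variable {m n R : Type*} [Fintype m] [Fintype n]

theorem dotProduct_self_eq_norm_toLp_sq (x : n → ℝ) : x ⬝ᵥ x = ‖WithLp.toLp 2 x‖ ^ 2 := by
  rw [EuclideanSpace.real_norm_sq_eq]
  simp [dotProduct, sq]

theorem posSemidef_sq_smul_one_sub_mul_transpose [DecidableEq m] [DecidableEq n]
    {K : Matrix m n ℝ} {κ : ℝ} (hK : ‖K‖ ≤ κ) :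
    (κ ^ 2 • (1 : Matrix m m ℝ) - K * Kᵀ).PosSemidef := by
  refine .of_dotProduct_mulVec_nonneg ?_ fun y => ?_
  · simp [IsHermitian, conjTranspose_eq_transpose_of_trivial, transpose_mul]
  have hKt : ‖Kᵀ‖ ≤ κ := by
    rwa [← conjTranspose_eq_transpose_of_trivial, l2_opNorm_conjTranspose]
  have hbound : ‖WithLp.toLp 2 (Kᵀ *ᵥ y)‖ ≤ κ * ‖WithLp.toLp 2 y‖ :=
    (l2_opNorm_mulVec Kᵀ (WithLp.toLp 2 y)).trans (by gcongr)
  have hquad : y ⬝ᵥ ((K * Kᵀ) *ᵥ y) = (Kᵀ *ᵥ y) ⬝ᵥ (Kᵀ *ᵥ y) := by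
    rw [← mulVec_mulVec, dotProduct_mulVec, ← mulVec_transpose]
  rw [star_trivial, sub_mulVec, dotProduct_sub, hquad, smul_mulVec, one_mulVec, dotProduct_smul,
    smul_eq_mul, sub_nonneg, dotProduct_self_eq_norm_toLp_sq, dotProduct_self_eq_norm_toLp_sq,
    ← mul_pow]
  exact pow_le_pow_left₀ (norm_nonneg _) hbound 2

section StarOrderedRing

variable [CommRing R] [PartialOrder R] [StarRing R] [StarOrderedRing R]

theorem PosSemidef.fromBlocks_zero_zero {A : Matrix m m R} {D : Matrix n n R}
    (hA : A.PosSemidef) (hD : D.PosSemidef) : (fromBlocks A 0 0 D).PosSemidef := by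
  refine .of_dotProduct_mulVec_nonneg ?_ fun x => ?_
  · exact isHermitian_fromBlocks_iff.2 ⟨hA.1, by simp, by simp, hD.1⟩
  rw [← Sum.elim_comp_inl_inr x, fromBlocks_mulVec]
  simp only [zero_mulVec, add_zero, zero_add, Function.star_sumElim, Sum.elim_comp_inl,
    Sum.elim_comp_inr, sumElim_dotProduct_sumElim]
  exact add_nonneg (hA.dotProduct_mulVec_nonneg _) (hD.dotProduct_mulVec_nonneg _)

theorem posSemidef_fromBlocks_one_conjTranspose_mul_self [DecidableEq n] (B : Matrix n m R) :
    (fromBlocks 1 B Bᴴ (Bᴴ * B)).PosSemidef := by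
  simpa [conjTranspose_fromCols_eq_fromRows_conjTranspose, fromRows_mul_fromCols] using
    posSemidef_conjTranspose_mul_self (fromCols (1 : Matrix n n R) B)

end StarOrderedRing

end Matrix

/-- If `‖K‖ ≤ κ` (spectral norm) with `κ ≥ 1` and `a ≥ 1`, then the symmetric block matrix
`[[a·Iₙ, a·Kᵀ], [a·K, a·K Kᵀ + 2κ²·Iₘ]]` is bounded below by `(1/2)·I_{n+m}` in the
Loewner order. -/
theorem block_matrix_loewner_lower_bound {n m : ℕ}
    (K : Matrix (Fin m) (Fin n) ℝ) (κ a : ℝ)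
    (hκ : 1 ≤ κ) (hK : ‖K‖ ≤ κ) (ha : 1 ≤ a) :
    (fromBlocks (a • (1 : Matrix (Fin n) (Fin n) ℝ)) (a • Kᵀ)
        (a • K) (a • (K * Kᵀ) + (2 * κ ^ 2) • (1 : Matrix (Fin m) (Fin m) ℝ)) -
      (1 / 2 : ℝ) • (1 : Matrix (Fin n ⊕ Fin m) (Fin n ⊕ Fin m) ℝ)).PosSemidef := by
  set R := (2 * κ ^ 2 - 1 / 2) • (1 : Matrix (Fin m) (Fin m) ℝ) - K * Kᵀ
  have hR : R.PosSemidef := by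
    have hsplit : R = (κ ^ 2 - 1 / 2) • 1 + (κ ^ 2 • 1 - K * Kᵀ) := by module
    rw [hsplit]
    exact (PosSemidef.one.smul (by nlinarith)).add (posSemidef_sq_smul_one_sub_mul_transpose hK)
  have hgram (B : Matrix (Fin n) (Fin m) ℝ) := posSemidef_fromBlocks_one_conjTranspose_mul_self B
  have hG₁ := (hgram Kᵀ).smul (sub_nonneg.2 ha)
  have hG₂ := (hgram ((2 : ℝ) • Kᵀ)).smul (by norm_num : (0 : ℝ) ≤ 1 / 2)
  refine (congrArg PosSemidef ?_).mpr ((hG₁.add hG₂).add (PosSemidef.zero.fromBlocks_zero_zero hR))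
  simp only [← fromBlocks_one, sub_eq_add_neg, fromBlocks_smul, fromBlocks_neg, fromBlocks_add, R,
    conjTranspose_eq_transpose_of_trivial, transpose_transpose, transpose_smul, Matrix.smul_mul,
    Matrix.mul_smul, smul_smul]
  congr 1 <;> module
end

section
/- Let d ≥ 1, let 0 < λ₁ ≤ λ_T, let Z ≥ 0, let z₁, …, z_T ∈ ℝ^d satisfy ‖z_t‖² ≤ Z for every t, and let N be a natural number such that 2^N·λ₁^d ≤ det(λ_T·I_d + Σ_{t=1}^T z_t z_tᵀ). Then N ≤ d·log₂((λ_T + Z·T)/λ₁). -/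
/-!
`M = λ_T • 1 + ∑ z_t z_tᵀ` is positive semidefinite, and on a unit vector `x` its quadratic form
is `λ_T + ∑ ⟪z_t, x⟫² ≤ λ_T + ∑ ‖z_t‖² ≤ λ_T + Z T` by Cauchy–Schwarz. Hence every eigenvalue of
`M` lies in `[0, λ_T + Z T]`, so `2^N λ₁^d ≤ det M ≤ (λ_T + Z T)^d`; take `log₂`.
-/

open Matrix

namespace Matrix

variable {n : Type*} [Fintype n]

theorem IsHermitian.eigenvalues_le_of_forall_norm_eq_one [DecidableEq n] {𝕜 : Type*} [RCLike 𝕜]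
    {A : Matrix n n 𝕜} (hA : A.IsHermitian) {c : ℝ}
    (h : ∀ x : EuclideanSpace 𝕜 n, ‖x‖ = 1 → RCLike.re (star ⇑x ⬝ᵥ (A *ᵥ ⇑x)) ≤ c) (i : n) :
    hA.eigenvalues i ≤ c :=
  hA.eigenvalues_eq i ▸ h _ (hA.eigenvectorBasis.orthonormal.1 i)

theorem PosSemidef.det_le_pow_of_forall_norm_eq_one [DecidableEq n] {A : Matrix n n ℝ}
    (hA : A.PosSemidef) {c : ℝ} (h : ∀ x : EuclideanSpace ℝ n, ‖x‖ = 1 → ⇑x ⬝ᵥ (A *ᵥ ⇑x) ≤ c) :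
    A.det ≤ c ^ Fintype.card n := by
  rw [hA.isHermitian.det_eq_prod_eigenvalues]
  refine (Finset.prod_le_prod (fun i _ => by simpa using hA.eigenvalues_nonneg i)
    fun i _ => ?_).trans_eq (Finset.prod_const c)
  simpa using hA.isHermitian.eigenvalues_le_of_forall_norm_eq_one (by simpa) i

theorem dotProduct_vecMulVec_self_mulVec {R : Type*} [CommSemiring R] (a x : n → R) :
    x ⬝ᵥ (vecMulVec a a *ᵥ x) = (a ⬝ᵥ x) ^ 2 := by
  rw [vecMulVec_mulVec, op_smul_eq_smul, dotProduct_smul, smul_eq_mul, dotProduct_comm, sq]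

theorem dotProduct_smul_one_add_sum_vecMulVec_mulVec [DecidableEq n] {ι R : Type*} [Fintype ι]
    [CommSemiring R] (lam : R) (a : ι → n → R) (x : n → R) :
    x ⬝ᵥ ((lam • 1 + ∑ t, vecMulVec (a t) (a t)) *ᵥ x) = lam * (x ⬝ᵥ x) + ∑ t, (a t ⬝ᵥ x) ^ 2 := by
  simp only [add_mulVec, smul_mulVec, one_mulVec, Matrix.sum_mulVec, dotProduct_add,
    dotProduct_smul, dotProduct_sum, dotProduct_vecMulVec_self_mulVec, smul_eq_mul]

theorem posSemidef_smul_one_add_sum_vecMulVec [DecidableEq n] {ι : Type*} [Fintype ι] {lam : ℝ}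
    (hlam : 0 ≤ lam) (a : ι → n → ℝ) :
    (lam • 1 + ∑ t, vecMulVec (a t) (a t)).PosSemidef :=
  (PosSemidef.one.smul hlam).add <|
    posSemidef_sum _ fun t _ => by simpa using posSemidef_vecMulVec_self_star (a t)

theorem det_smul_one_add_sum_vecMulVec_le [DecidableEq n] {ι : Type*} [Fintype ι] {lam : ℝ}
    (hlam : 0 ≤ lam) (z : ι → EuclideanSpace ℝ n) :
    (lam • 1 + ∑ t, vecMulVec ⇑(z t) ⇑(z t)).det ≤ (lam + ∑ t, ‖z t‖ ^ 2) ^ Fintype.card n := by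
  refine (posSemidef_smul_one_add_sum_vecMulVec hlam _).det_le_pow_of_forall_norm_eq_one
    fun x hx => ?_
  have hinner : ∀ y : EuclideanSpace ℝ n, ⇑y ⬝ᵥ ⇑x = inner ℝ x y := fun y => by
    rw [EuclideanSpace.inner_eq_star_dotProduct, star_trivial]
  have hxx : ⇑x ⬝ᵥ ⇑x = 1 := by rw [hinner, real_inner_self_eq_norm_sq, hx, one_pow]
  have hcs : ∀ t, (⇑(z t) ⬝ᵥ ⇑x) ^ 2 ≤ ‖z t‖ ^ 2 := fun t => by
    simpa [hinner, hx] using sq_le_sq' (neg_le_of_abs_le (abs_real_inner_le_norm x (z t)))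
      (le_of_abs_le (abs_real_inner_le_norm x (z t)))
  rw [dotProduct_smul_one_add_sum_vecMulVec_mulVec, hxx, mul_one]
  exact (add_le_add_iff_left lam).2 (Finset.sum_le_sum fun t _ => hcs t)

end Matrix

theorem Real.natCast_le_mul_logb_div_of_pow_mul_pow_le {b a c : ℝ} (hb : 1 < b) (ha : 0 < a)
    {N d : ℕ} (h : b ^ N * a ^ d ≤ c ^ d) : (N : ℝ) ≤ d * Real.logb b (c / a) := by
  have hpow : b ^ N ≤ (c / a) ^ d := by
    rwa [div_pow, le_div_iff₀ (by positivity)]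
  calc (N : ℝ) = Real.logb b (b ^ N) := by simp [Real.logb_pow, Real.logb_self_eq_one hb]
    _ ≤ Real.logb b ((c / a) ^ d) := Real.logb_le_logb_of_le hb (by positivity) hpow
    _ = d * Real.logb b (c / a) := Real.logb_pow _ _ _

theorem switch_count_bound_general {d T : ℕ}
    (lam₁ lamT Z : ℝ) (hlam₁ : 0 < lam₁) (hlam : lam₁ ≤ lamT)
    (z : Fin T → EuclideanSpace ℝ (Fin d)) (hz : ∀ t, ‖z t‖ ^ 2 ≤ Z)
    (N : ℕ)
    (hN : 2 ^ N * lam₁ ^ d ≤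
      (lamT • (1 : Matrix (Fin d) (Fin d) ℝ) + ∑ t : Fin T, vecMulVec (z t) (z t)).det) :
    (N : ℝ) ≤ d * Real.logb 2 ((lamT + Z * T) / lam₁) := by
  have hlamT : 0 ≤ lamT := hlam₁.le.trans hlam
  have hsum : ∑ t, ‖z t‖ ^ 2 ≤ Z * T := by
    simpa [mul_comm] using Finset.sum_le_sum fun t (_ : t ∈ Finset.univ) => hz t
  have hdet : (lamT • (1 : Matrix (Fin d) (Fin d) ℝ) + ∑ t, vecMulVec (z t) (z t)).det
      ≤ (lamT + Z * T) ^ d := by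
    simpa using (det_smul_one_add_sum_vecMulVec_le hlamT z).trans
      (pow_le_pow_left₀ (by positivity) (add_le_add_right hsum lamT) _)
  exact Real.natCast_le_mul_logb_div_of_pow_mul_pow_le one_lt_two hlam₁ (hN.trans hdet)

/-- If `d ≥ 1`, `0 < λ₁ ≤ λ_T`, `Z ≥ 0`, `‖z_t‖² ≤ Z` for all `t`, and
`2^N·λ₁^d ≤ det(λ_T·I_d + Σ_t z_t z_tᵀ)`, then `N ≤ d·log₂((λ_T + Z·T)/λ₁)`.
(Bound on the number of policy switches under the determinant-doubling criterion.) -/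
theorem switch_count_bound {d T : ℕ} (hd : 1 ≤ d)
    (lam₁ lamT Z : ℝ) (hlam₁ : 0 < lam₁) (hlam : lam₁ ≤ lamT) (hZ : 0 ≤ Z)
    (z : Fin T → EuclideanSpace ℝ (Fin d)) (hz : ∀ t, ‖z t‖ ^ 2 ≤ Z)
    (N : ℕ)
    (hN : 2 ^ N * lam₁ ^ d ≤
      (lamT • (1 : Matrix (Fin d) (Fin d) ℝ) + ∑ t : Fin T, vecMulVec (z t) (z t)).det) :
    (N : ℝ) ≤ d * Real.logb 2 ((lamT + Z * T) / lam₁) :=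
  switch_count_bound_general lam₁ lamT Z hlam₁ hlam z hz N hN
end

section
/- Let P₁ and P₂ be positive definite n×n real matrices, let α₀ > 0 and γ > 0, and suppose P₂ ⪰ (α₀/2)·I and P₁ ⪯ P₂ + (γ·α₀/2)·I. Then ‖P₂^{−1/2} P₁^{1/2}‖² ≤ 1 + γ, and consequently ‖P₂^{−1/2} P₁^{1/2}‖ ≤ 1 + γ/2. -/
open Matrix
open scoped Matrix.Norms.L2Operator

/-- The positive semidefinite square root, as `Matrix.PosSemidef.sqrt` was defined in the older
Mathlib (removed since). -/
noncomputable def Matrix.PosSemidef.sqrt {n : Type*} [Fintype n] [DecidableEq n]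
    {A : Matrix n n ℝ} (hA : A.PosSemidef) : Matrix n n ℝ :=
  hA.1.eigenvectorUnitary.1 * diagonal ((↑) ∘ (√·) ∘ hA.1.eigenvalues) *
    (star hA.1.eigenvectorUnitary : Matrix n n ℝ)
/-!
Adding `γ` times the lower bound on `P₂` to the closeness hypothesis gives `P₁ ⪯ (1 + γ) P₂`.
Conjugating by `P₂^{−1/2}` turns this into `X Xᵀ ⪯ (1 + γ) I` for `X = P₂^{−1/2} P₁^{1/2}`, and the
C⋆-identity `‖X‖² = ‖X Xᵀ‖` together with `‖a‖ = max |spectrum a|` for `0 ⪯ a` gives `‖X‖² ≤ 1 + γ`.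
The second bound is then `1 + γ ≤ (1 + γ/2)²`.
-/

open scoped MatrixOrder

section

variable {A : Type*} [NormedRing A] [StarRing A] [NormedAlgebra ℝ A] [PartialOrder A]
  [StarOrderedRing A] [IsometricContinuousFunctionalCalculus ℝ A IsSelfAdjoint]
  [NonnegSpectrumClass ℝ A]

theorem norm_le_of_nonneg_of_le_algebraMap {a : A} {r : ℝ} (hr : 0 ≤ r) (ha : 0 ≤ a)
    (h : a ≤ algebraMap ℝ A r) : ‖a‖ ≤ r := by
  rw [← cfc_id' ℝ a]
  refine norm_cfc_le hr fun x hx => abs_le.mpr ⟨?_, ?_⟩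
  · linarith [spectrum_nonneg_of_nonneg ha hx]
  · exact (le_algebraMap_iff_spectrum_le (R := ℝ)).mp h x hx

variable [CStarRing A]

theorem norm_sq_le_of_mul_star_le_algebraMap {x : A} {r : ℝ} (hr : 0 ≤ r)
    (h : x * star x ≤ algebraMap ℝ A r) : ‖x‖ ^ 2 ≤ r := by
  rw [sq, ← CStarRing.norm_self_mul_star]
  exact norm_le_of_nonneg_of_le_algebraMap hr (mul_star_self_nonneg x) h

theorem norm_sq_ringInverse_cfcSqrt_mul_cfcSqrt_le {a b : A} {r : ℝ} (hr : 0 ≤ r) (ha : 0 ≤ a)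
    (hb : IsStrictlyPositive b) (hab : a ≤ r • b) :
    ‖Ring.inverse (CFC.sqrt b) * CFC.sqrt a‖ ^ 2 ≤ r := by
  set c := Ring.inverse (CFC.sqrt b)
  have hc : 0 ≤ c := hb.sqrt.ringInverse.nonneg
  have hcbc : c * b * c = 1 := by
    have hcs : c * CFC.sqrt b = 1 := Ring.inverse_mul_cancel _ hb.isUnit_cfcSqrt
    have hsc : CFC.sqrt b * c = 1 := Ring.mul_inverse_cancel _ hb.isUnit_cfcSqrt
    rw [← CFC.sqrt_mul_sqrt_self b hb.nonneg, mul_assoc c, mul_assoc, hsc, ← mul_assoc, hcs,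
      one_mul]
  refine norm_sq_le_of_mul_star_le_algebraMap hr ?_
  calc c * CFC.sqrt a * star (c * CFC.sqrt a) = c * a * c := by
        rw [star_mul, (IsSelfAdjoint.of_nonneg (CFC.sqrt_nonneg a)).star_eq,
          (IsSelfAdjoint.of_nonneg hc).star_eq, mul_assoc, ← mul_assoc (CFC.sqrt a),
          CFC.sqrt_mul_sqrt_self a ha, ← mul_assoc]
    _ ≤ c * (r • b) * c := conjugate_le_conjugate_of_nonneg hab hc
    _ = algebraMap ℝ A r := by
        rw [mul_smul_comm, smul_mul_assoc, hcbc, Algebra.algebraMap_eq_smul_one]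

end

theorem Matrix.PosSemidef.sqrt_eq_cfcSqrt {n : Type*} [Fintype n] [DecidableEq n]
    {A : Matrix n n ℝ} (hA : A.PosSemidef) : hA.sqrt = CFC.sqrt A := by
  rw [CFC.sqrt_eq_real_sqrt A hA.nonneg, cfcₙ_eq_cfc, hA.1.cfc_eq]
  rfl

theorem sequential_stability_norm_bound_general {n : ℕ}
    (P₁ P₂ : Matrix (Fin n) (Fin n) ℝ) (α₀ γ : ℝ)
    (hγ : 0 < γ)
    (hP₁ : P₁.PosDef) (hP₂ : P₂.PosDef)
    (hlow : (P₂ - (α₀ / 2) • (1 : Matrix (Fin n) (Fin n) ℝ)).PosSemidef)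
    (hclose : (P₂ + (γ * α₀ / 2) • (1 : Matrix (Fin n) (Fin n) ℝ) - P₁).PosSemidef) :
    ‖(hP₂.posSemidef.sqrt)⁻¹ * hP₁.posSemidef.sqrt‖ ^ 2 ≤ 1 + γ ∧
      ‖(hP₂.posSemidef.sqrt)⁻¹ * hP₁.posSemidef.sqrt‖ ≤ 1 + γ / 2 := by
  have hle : P₁ ≤ (1 + γ) • P₂ := by
    have h := hclose.add (hlow.smul hγ.le)
    rwa [show P₂ + (γ * α₀ / 2) • (1 : Matrix (Fin n) (Fin n) ℝ) - P₁ +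
      γ • (P₂ - (α₀ / 2) • (1 : Matrix (Fin n) (Fin n) ℝ)) = (1 + γ) • P₂ - P₁ by module] at h
  have hsq : ‖(hP₂.posSemidef.sqrt)⁻¹ * hP₁.posSemidef.sqrt‖ ^ 2 ≤ 1 + γ := by
    rw [hP₁.posSemidef.sqrt_eq_cfcSqrt, hP₂.posSemidef.sqrt_eq_cfcSqrt,
      Matrix.nonsing_inv_eq_ringInverse]
    exact norm_sq_ringInverse_cfcSqrt_mul_cfcSqrt_le (by positivity) hP₁.posSemidef.nonneg
      (Matrix.isStrictlyPositive_iff_posDef.mpr hP₂) hle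
  refine ⟨hsq, (pow_le_pow_iff_left₀ (norm_nonneg _) (by positivity) two_ne_zero).mp ?_⟩
  nlinarith

/-- If `P₂ ⪰ (α₀/2)·I` and `P₁ ⪯ P₂ + (γ·α₀/2)·I` for positive definite `P₁, P₂`, then
`‖P₂^{−1/2} P₁^{1/2}‖² ≤ 1 + γ`, hence `‖P₂^{−1/2} P₁^{1/2}‖ ≤ 1 + γ/2`
(spectral norms, `P^{1/2}` the positive definite square root). -/
theorem sequential_stability_norm_bound {n : ℕ}
    (P₁ P₂ : Matrix (Fin n) (Fin n) ℝ) (α₀ γ : ℝ)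
    (hα₀ : 0 < α₀) (hγ : 0 < γ)
    (hP₁ : P₁.PosDef) (hP₂ : P₂.PosDef)
    (hlow : (P₂ - (α₀ / 2) • (1 : Matrix (Fin n) (Fin n) ℝ)).PosSemidef)
    (hclose : (P₂ + (γ * α₀ / 2) • (1 : Matrix (Fin n) (Fin n) ℝ) - P₁).PosSemidef) :
    ‖(hP₂.posSemidef.sqrt)⁻¹ * hP₁.posSemidef.sqrt‖ ^ 2 ≤ 1 + γ ∧
      ‖(hP₂.posSemidef.sqrt)⁻¹ * hP₁.posSemidef.sqrt‖ ≤ 1 + γ / 2 :=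
  sequential_stability_norm_bound_general P₁ P₂ α₀ γ hγ hP₁ hP₂ hlow hclose
end

section
/- Let 0 < γ < 1, B₀ > 0, b₀ > 0, κ := B₀/b₀, and let s < t be natural numbers. Suppose H_s, …, H_{t−1} are invertible real n×n matrices and L_s, …, L_{t−1} are real n×n matrices with ‖L_j‖ ≤ 1 − γ for all s ≤ j ≤ t−1, ‖H_{j+1}⁻¹ H_j‖ ≤ 1 + γ/2 for all s ≤ j ≤ t−2, ‖H_{t−1}‖ ≤ B₀, and ‖H_s⁻¹‖ ≤ 1/b₀. Then the ordered product satisfies ‖(H_{t−1} L_{t−1} H_{t−1}⁻¹)·(H_{t−2} L_{t−2} H_{t−2}⁻¹) ⋯ (H_s L_s H_s⁻¹)‖ ≤ κ·(1 − γ/2)^{t−s}. -/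
open scoped Matrix.Norms.L2Operator

/-!
Writing `Mⱼ = Hⱼ Lⱼ Hⱼ⁻¹`, the ordered product regroups by associativity alone into
`H_{t−1} · L_{t−1} (H_{t−1}⁻¹ H_{t−2}) ⋯ L_{s+1} (H_{s+1}⁻¹ H_s) · L_s H_s⁻¹`.
Each middle factor has norm at most `(1 − γ)(1 + γ/2) ≤ 1 − γ/2`, the outer ones at most `B₀`
and `(1 − γ)/b₀ ≤ (1 − γ/2)/b₀`.
-/

/-- The transition product `Φ(s + m, s) = M (s + m - 1) * ⋯ * M s`. -/
def transition {R : Type*} [Monoid R] (M : ℕ → R) (s : ℕ) : ℕ → R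
  | 0 => 1
  | m + 1 => M (s + m) * transition M s m

section Monoid

variable {R : Type*} [Monoid R]

theorem transition_succ (M : ℕ → R) (s m : ℕ) :
    transition M s (m + 1) = M (s + m) * transition M s m := rfl

theorem list_prod_map_range_sub_eq_transition (M : ℕ → R) (s m : ℕ) :
    ((List.range (m + 1)).map fun i => M (s + m - i)).prod = transition M s (m + 1) := by
  induction m with
  | zero => simp [transition]
  | succ m ih =>
    rw [List.range_succ_eq_map, List.map_cons, List.prod_cons, List.map_map, transition_succ,
      ← ih]
    congr 3
    funext i
    simp only [Function.comp_apply, Nat.succ_eq_add_one]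
    congr 1
    omega

theorem transition_conj_eq (H L G : ℕ → R) (s m : ℕ) :
    transition (fun j => H j * L j * G j) s (m + 1) =
      H (s + m) * transition (fun j => L (j + 1) * (G (j + 1) * H j)) s m * (L s * G s) := by
  induction m with
  | zero => simp [transition, mul_assoc]
  | succ m ih =>
    rw [transition_succ, ih, transition_succ, ← add_assoc]
    simp only [mul_assoc]

end Monoid

section SeminormedRing

variable {R : Type*} [SeminormedRing R]

theorem norm_transition_mul_le {N : ℕ → R} {s m : ℕ} {c : ℝ}
    (hN : ∀ j, s ≤ j → j < s + m → ‖N j‖ ≤ c) (A : R) :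
    ‖transition N s m * A‖ ≤ c ^ m * ‖A‖ := by
  induction m with
  | zero => simp [transition]
  | succ m ih =>
    have hNm : ‖N (s + m)‖ ≤ c := hN (s + m) (by omega) (by omega)
    calc ‖transition N s (m + 1) * A‖
        ≤ ‖N (s + m)‖ * ‖transition N s m * A‖ := by
          rw [transition_succ, mul_assoc]
          exact norm_mul_le _ _
      _ ≤ c * (c ^ m * ‖A‖) :=
          mul_le_mul hNm (ih fun j hsj hj => hN j hsj (by omega)) (norm_nonneg _)
            ((norm_nonneg _).trans hNm)
      _ = c ^ (m + 1) * ‖A‖ := by ring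

theorem norm_transition_conj_le {H L G : ℕ → R} {s m : ℕ} {c : ℝ}
    (hstep : ∀ j, s ≤ j → j < s + m → ‖L (j + 1) * (G (j + 1) * H j)‖ ≤ c) :
    ‖transition (fun j => H j * L j * G j) s (m + 1)‖ ≤ ‖H (s + m)‖ * c ^ m * ‖L s * G s‖ := by
  rw [transition_conj_eq, mul_assoc, mul_assoc]
  exact (norm_mul_le _ _).trans <|
    mul_le_mul_of_nonneg_left (norm_transition_mul_le hstep _) (norm_nonneg _)

end SeminormedRing

theorem ordered_product_norm_bound_general {n : ℕ}
    (γ B₀ b₀ : ℝ) (hγ0 : 0 < γ) (hγ1 : γ < 1) (hB₀ : 0 < B₀) (hb₀ : 0 < b₀)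
    (s t : ℕ) (hst : s < t)
    (H L : ℕ → Matrix (Fin n) (Fin n) ℝ)
    (hL : ∀ j, s ≤ j → j + 1 ≤ t → ‖L j‖ ≤ 1 - γ)
    (hseq : ∀ j, s ≤ j → j + 2 ≤ t → ‖(H (j + 1))⁻¹ * H j‖ ≤ 1 + γ / 2)
    (hHt : ‖H (t - 1)‖ ≤ B₀) (hHs : ‖(H s)⁻¹‖ ≤ 1 / b₀) :
    ‖((List.range (t - s)).map
        (fun i => H (t - 1 - i) * L (t - 1 - i) * (H (t - 1 - i))⁻¹)).prod‖ ≤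
      (B₀ / b₀) * (1 - γ / 2) ^ (t - s) := by
  obtain ⟨m, rfl⟩ := Nat.exists_eq_add_of_lt hst
  have hlen : s + m + 1 - s = m + 1 := by omega
  have hlast : s + m + 1 - 1 = s + m := by omega
  simp only [hlen, hlast] at hHt ⊢
  rw [list_prod_map_range_sub_eq_transition (fun j => H j * L j * (H j)⁻¹)]
  have hstep : ∀ j, s ≤ j → j < s + m → ‖L (j + 1) * ((H (j + 1))⁻¹ * H j)‖ ≤ 1 - γ / 2 :=
    fun j hsj hj => calc
      _ ≤ ‖L (j + 1)‖ * ‖(H (j + 1))⁻¹ * H j‖ := norm_mul_le _ _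
      _ ≤ (1 - γ) * (1 + γ / 2) :=
          mul_le_mul (hL _ (by omega) (by omega)) (hseq j hsj (by omega)) (norm_nonneg _)
            (by linarith)
      _ ≤ 1 - γ / 2 := by nlinarith
  have hfirst : ‖L s * (H s)⁻¹‖ ≤ (1 - γ / 2) / b₀ := calc
    _ ≤ ‖L s‖ * ‖(H s)⁻¹‖ := norm_mul_le _ _
    _ ≤ (1 - γ) * (1 / b₀) :=
        mul_le_mul (hL s le_rfl (by omega)) hHs (norm_nonneg _) (by linarith)
    _ ≤ (1 - γ / 2) / b₀ := by rw [mul_one_div]; gcongr; linarith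
  have hρ : 0 ≤ (1 - γ / 2) ^ m := pow_nonneg (by linarith) m
  calc _ ≤ ‖H (s + m)‖ * (1 - γ / 2) ^ m * ‖L s * (H s)⁻¹‖ :=
        norm_transition_conj_le (G := fun j => (H j)⁻¹) hstep
    _ ≤ B₀ * (1 - γ / 2) ^ m * ((1 - γ / 2) / b₀) :=
        mul_le_mul (mul_le_mul_of_nonneg_right hHt hρ) hfirst (norm_nonneg _)
          (mul_nonneg hB₀.le hρ)
    _ = B₀ / b₀ * (1 - γ / 2) ^ (m + 1) := by ring

/-- Transition-matrix product bound for a `(κ,γ)`-strongly sequentially stable sequence: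
if `‖L_j‖ ≤ 1 − γ` for `s ≤ j ≤ t−1`, `‖H_{j+1}⁻¹ H_j‖ ≤ 1 + γ/2` for `s ≤ j ≤ t−2`,
`‖H_{t−1}‖ ≤ B₀` and `‖H_s⁻¹‖ ≤ 1/b₀`, then the ordered product
`(H_{t−1} L_{t−1} H_{t−1}⁻¹)⋯(H_s L_s H_s⁻¹)` has spectral norm at most
`κ·(1 − γ/2)^{t−s}` with `κ = B₀/b₀`. -/
theorem ordered_product_norm_bound {n : ℕ}
    (γ B₀ b₀ : ℝ) (hγ0 : 0 < γ) (hγ1 : γ < 1) (hB₀ : 0 < B₀) (hb₀ : 0 < b₀)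
    (s t : ℕ) (hst : s < t)
    (H L : ℕ → Matrix (Fin n) (Fin n) ℝ)
    (hHinv : ∀ j, s ≤ j → j + 1 ≤ t → IsUnit (H j).det)
    (hL : ∀ j, s ≤ j → j + 1 ≤ t → ‖L j‖ ≤ 1 - γ)
    (hseq : ∀ j, s ≤ j → j + 2 ≤ t → ‖(H (j + 1))⁻¹ * H j‖ ≤ 1 + γ / 2)
    (hHt : ‖H (t - 1)‖ ≤ B₀) (hHs : ‖(H s)⁻¹‖ ≤ 1 / b₀) :
    ‖((List.range (t - s)).map
        (fun i => H (t - 1 - i) * L (t - 1 - i) * (H (t - 1 - i))⁻¹)).prod‖ ≤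
      (B₀ / b₀) * (1 - γ / 2) ^ (t - s) :=
  ordered_product_norm_bound_general γ B₀ b₀ hγ0 hγ1 hB₀ hb₀ s t hst H L hL hseq hHt hHs
end

section
/- Let 0 < γ < 1, B₀ > 0, b₀ > 0, κ := B₀/b₀. Let (x_t)_{t≥1} and (ζ_t)_{t≥1} be sequences in ℝⁿ and (M_t)_{t≥1} a sequence of real n×n matrices satisfying x_{t+1} = M_t x_t + ζ_t for all t ≥ 1, where each M_t = H_t L_t H_t⁻¹ with H_t invertible, ‖L_t‖ ≤ 1 − γ, ‖H_t‖ ≤ B₀, ‖H_t⁻¹‖ ≤ 1/b₀, and ‖H_{t+1}⁻¹ H_t‖ ≤ 1 + γ/2 for all t. Then for every t ≥ 1, ‖x_t‖ ≤ κ·(1 − γ/2)^{t−1}·‖x₁‖ + (2κ/γ)·max_{1 ≤ s ≤ t−1} ‖ζ_s‖. -/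
/-!
In the coordinates `v_t = H_t⁻¹ x_t` the closed loop becomes
`v_{t+1} = (H_{t+1}⁻¹ H_t) L_t v_t + H_{t+1}⁻¹ ζ_t`, a contraction by
`(1 + γ/2)(1 - γ) ≤ 1 - γ/2` driven by a disturbance of size at most `‖ζ_t‖ / b₀`.
Unrolling this scalar recursion bounds `‖v_t‖` by a geometric transient plus
`(‖ζ‖_max / b₀) / (γ/2)`, and returning to `x_t = H_t v_t` costs the factor `B₀`.
-/

open Matrix
open scoped Matrix.Norms.L2Operator

theorem Finset.le_ciSup₂ {α ι : Type*} [ConditionallyCompleteLattice α] (F : Finset ι)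
    (f : ι → α) {i : ι} (hi : i ∈ F) : f i ≤ ⨆ j ∈ F, f j := by
  classical
  refine le_ciSup_of_le ?_ i (by rw [ciSup_pos hi])
  refine ((F.finite_toSet.image f).insert (sSup ∅)).bddAbove.mono ?_
  rintro _ ⟨j, rfl⟩
  by_cases hj : j ∈ F
  · exact Set.mem_insert_of_mem _ ⟨j, hj, (ciSup_pos (f := fun _ => f j) hj).symm⟩
  · simp [ciSup_neg hj]

theorem le_pow_mul_add_div_of_le_mul_add {a : ℕ → ℝ} {ρ c : ℝ} {m : ℕ} (hρ0 : 0 ≤ ρ)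
    (hρ1 : ρ < 1) (hc : 0 ≤ c) (h : ∀ k < m, a (k + 1) ≤ ρ * a k + c) :
    a m ≤ ρ ^ m * a 0 + c / (1 - ρ) := by
  have hρ1' : 0 < 1 - ρ := sub_pos.2 hρ1
  induction m with
  | zero => simpa using div_nonneg hc hρ1'.le
  | succ m ih =>
    calc a (m + 1) ≤ ρ * a m + c := h m (Nat.lt_succ_self m)
      _ ≤ ρ * (ρ ^ m * a 0 + c / (1 - ρ)) + c := by
        gcongr
        exact ih fun k hk => h k (Nat.lt_succ_of_lt hk)
      _ = ρ ^ (m + 1) * a 0 + c / (1 - ρ) := by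
        field_simp
        ring

namespace Matrix

variable {𝕜 m n : Type*} [RCLike 𝕜] [Fintype m] [Fintype n] [DecidableEq n]

theorem norm_toEuclideanLin_apply_le_of_le {A : Matrix m n 𝕜} {c : ℝ} (hA : ‖A‖ ≤ c)
    (v : EuclideanSpace 𝕜 n) : ‖toEuclideanLin A v‖ ≤ c * ‖v‖ :=
  (A.l2_opNorm_mulVec v).trans (mul_le_mul_of_nonneg_right hA (norm_nonneg v))

theorem norm_toEuclideanLin_inv_conj_add_le [DecidableEq m] {H H' L : Matrix m m ℝ} {γ : ℝ}
    (hL : ‖L‖ ≤ 1 - γ) (hHH' : ‖H'⁻¹ * H‖ ≤ 1 + γ / 2) (x ζ : EuclideanSpace ℝ m) :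
    ‖toEuclideanLin H'⁻¹ (toEuclideanLin (H * L * H⁻¹) x + ζ)‖ ≤
      (1 - γ / 2) * ‖toEuclideanLin H⁻¹ x‖ + ‖H'⁻¹‖ * ‖ζ‖ := by
  set v := toEuclideanLin H⁻¹ x
  have hsplit : toEuclideanLin H'⁻¹ (toEuclideanLin (H * L * H⁻¹) x + ζ) =
      toEuclideanLin (H'⁻¹ * H) (toEuclideanLin L v) + toEuclideanLin H'⁻¹ ζ := by
    simp [v, Matrix.mul_assoc]
  have hLv := norm_toEuclideanLin_apply_le_of_le hL v
  calc _ ≤ (1 + γ / 2) * ((1 - γ) * ‖v‖) + ‖H'⁻¹‖ * ‖ζ‖ := by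
        rw [hsplit]
        refine norm_add_le_of_le ?_ (norm_toEuclideanLin_apply_le_of_le le_rfl ζ)
        refine (norm_toEuclideanLin_apply_le_of_le hHH' _).trans ?_
        exact mul_le_mul_of_nonneg_left hLv ((norm_nonneg _).trans hHH')
    _ ≤ (1 - γ / 2) * ‖v‖ + ‖H'⁻¹‖ * ‖ζ‖ := by
        nlinarith [mul_nonneg (sq_nonneg γ) (norm_nonneg v)]

theorem norm_le_mul_norm_toEuclideanLin_inv_apply {H : Matrix n n 𝕜} (hH : IsUnit H.det) {B : ℝ}
    (hHB : ‖H‖ ≤ B) (x : EuclideanSpace 𝕜 n) : ‖x‖ ≤ B * ‖toEuclideanLin H⁻¹ x‖ := by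
  have hx : x = toEuclideanLin H (toEuclideanLin H⁻¹ x) := by
    rw [← LinearMap.comp_apply, ← toLpLin_mul_same, mul_nonsing_inv _ hH]
    simp
  calc ‖x‖ = ‖toEuclideanLin H (toEuclideanLin H⁻¹ x)‖ := congrArg _ hx
    _ ≤ B * ‖toEuclideanLin H⁻¹ x‖ := norm_toEuclideanLin_apply_le_of_le hHB _

end Matrix

/-- Deterministic state-norm bound under a `(κ,γ)`-strongly sequentially stabilizing
sequence of closed-loop matrices: if `x_{t+1} = M_t x_t + ζ_t` with
`M_t = H_t L_t H_t⁻¹`, `‖L_t‖ ≤ 1 − γ`, `‖H_t‖ ≤ B₀`, `‖H_t⁻¹‖ ≤ 1/b₀`, and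
`‖H_{t+1}⁻¹ H_t‖ ≤ 1 + γ/2` for all `t ≥ 1`, then for all `t ≥ 1`,
`‖x_t‖ ≤ κ·(1 − γ/2)^{t−1}·‖x₁‖ + (2κ/γ)·max_{1 ≤ s ≤ t−1} ‖ζ_s‖` with `κ = B₀/b₀`. -/
theorem state_norm_bound_sequential {n : ℕ}
    (γ B₀ b₀ : ℝ) (hγ0 : 0 < γ) (hγ1 : γ < 1) (hB₀ : 0 < B₀) (hb₀ : 0 < b₀)
    (x ζ : ℕ → EuclideanSpace ℝ (Fin n))
    (M H L : ℕ → Matrix (Fin n) (Fin n) ℝ)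
    (hdyn : ∀ t, 1 ≤ t → x (t + 1) = toEuclideanLin (M t) (x t) + ζ t)
    (hfac : ∀ t, 1 ≤ t → M t = H t * L t * (H t)⁻¹)
    (hHinv : ∀ t, 1 ≤ t → IsUnit (H t).det)
    (hL : ∀ t, 1 ≤ t → ‖L t‖ ≤ 1 - γ)
    (hH : ∀ t, 1 ≤ t → ‖H t‖ ≤ B₀)
    (hHinvNorm : ∀ t, 1 ≤ t → ‖(H t)⁻¹‖ ≤ 1 / b₀)
    (hseq : ∀ t, 1 ≤ t → ‖(H (t + 1))⁻¹ * H t‖ ≤ 1 + γ / 2) :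
    ∀ t, 1 ≤ t →
      ‖x t‖ ≤ (B₀ / b₀) * (1 - γ / 2) ^ (t - 1) * ‖x 1‖ +
        (2 * (B₀ / b₀) / γ) * ⨆ s ∈ Finset.Icc 1 (t - 1), ‖ζ s‖ := by
  intro t ht
  let v : ℕ → EuclideanSpace ℝ (Fin n) := fun s => toEuclideanLin (H s)⁻¹ (x s)
  set W := ⨆ s ∈ Finset.Icc 1 (t - 1), ‖ζ s‖
  have hW : 0 ≤ W := Real.iSup_nonneg fun _ => Real.iSup_nonneg fun _ => norm_nonneg _
  have hstep : ∀ k < t - 1, ‖v (k + 2)‖ ≤ (1 - γ / 2) * ‖v (k + 1)‖ + 1 / b₀ * W := by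
    intro k hk
    calc ‖v (k + 2)‖ ≤ (1 - γ / 2) * ‖v (k + 1)‖ + ‖(H (k + 2))⁻¹‖ * ‖ζ (k + 1)‖ := by
          simp only [v, hdyn (k + 1) (by omega), hfac (k + 1) (by omega)]
          exact norm_toEuclideanLin_inv_conj_add_le (hL _ (by omega)) (hseq _ (by omega)) _ _
      _ ≤ (1 - γ / 2) * ‖v (k + 1)‖ + 1 / b₀ * W := by
          gcongr
          · exact hHinvNorm _ (by omega)
          · exact Finset.le_ciSup₂ (Finset.Icc 1 (t - 1)) (‖ζ ·‖)
              (Finset.mem_Icc.2 ⟨by omega, by omega⟩)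
  have hv : ‖v t‖ ≤ (1 - γ / 2) ^ (t - 1) * ‖v 1‖ + 1 / b₀ * W / (γ / 2) := by
    have := le_pow_mul_add_div_of_le_mul_add (a := fun k => ‖v (k + 1)‖) (by linarith)
      (by linarith) (by positivity) hstep
    simpa [Nat.sub_add_cancel ht] using this
  have hxt : ‖x t‖ ≤ B₀ * ‖v t‖ :=
    norm_le_mul_norm_toEuclideanLin_inv_apply (hHinv t ht) (hH t ht) _
  have hv1 : ‖v 1‖ ≤ 1 / b₀ * ‖x 1‖ := norm_toEuclideanLin_apply_le_of_le (hHinvNorm 1 le_rfl) _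
  calc ‖x t‖ ≤ B₀ * ((1 - γ / 2) ^ (t - 1) * (1 / b₀ * ‖x 1‖) + 1 / b₀ * W / (γ / 2)) := by
        refine hxt.trans (mul_le_mul_of_nonneg_left (hv.trans ?_) hB₀.le)
        gcongr
        exact pow_nonneg (by linarith) _
    _ = _ := by ring
end
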